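/- Let p ≠ q be positive reals. The (p,q)-Rogers-Szegő polynomials H_n(z;p,q) = ∑_{k=0}^{n} [n choose k]_{p,q} z^k satisfy, for n ≥ 1, the three-term recurrence H_{n+1}(z;p,q) = H_n(pz;p,q) + z p^n H_n(p^{-1}z;p,q) - z(p^n - q^n) H_{n-1}(z;p,q). -/

import Mathlib

noncomputable def pqFact (p q : ℝ) (n : ℕ) : ℝ :=
  ∏ j ∈ Finset.range n, (p ^ (j + 1) - q ^ (j + 1)) / (p - q)

noncomputable def pqBinom (p q : ℝ) (n k : ℕ) : ℝ :=
  pqFact p q n / (pqFact p q k * pqFact p q (n - k))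

noncomputable def rogersSzego (p q : ℝ) (n : ℕ) (z : ℝ) : ℝ :=
  ∑ k ∈ Finset.range (n + 1), pqBinom p q n k * z ^ k

/-!
Writing `[n, k]` for `pqBinom p q n k` and `[n]` for `pqNum p q n`, the recurrence holds
coefficientwise: for `k ≤ m`,
`[m+2, k+1] = p^(k+1) [m+1, k+1] + p^(m+1-k) [m+1, k] - (p^(m+1) - q^(m+1)) [m, k]`.
This is the Pascal rule `[n+1, k+1] = p^(k+1) [n, k+1] + q^(n-k) [n, k]` with `q^(m+1-k)`
traded for `p^(m+1-k)` through the absorption identity `[m+1-k] [m+1, k] = [m+1] [m, k]`.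
The boundary coefficients `1` and `z^(n+1)` of `H_(n+1)(z)` are the constant term of `H_n(pz)`
and the leading term of `z p^n H_n(p⁻¹ z)`.
-/

noncomputable def pqNum (p q : ℝ) (n : ℕ) : ℝ :=
  (p ^ n - q ^ n) / (p - q)

section

variable {p q : ℝ}

lemma pqNum_add (p q : ℝ) (a b : ℕ) :
    pqNum p q (a + b) = p ^ a * pqNum p q b + q ^ b * pqNum p q a := by
  simp only [pqNum]
  ring

lemma sub_pow_eq_mul_pqNum (hne : p ≠ q) (n : ℕ) : p ^ n - q ^ n = (p - q) * pqNum p q n := by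
  rw [pqNum, mul_div_cancel₀ _ (sub_ne_zero.mpr hne)]

lemma pqNum_ne_zero (hp : 0 ≤ p) (hq : 0 ≤ q) (hne : p ≠ q) {n : ℕ} (hn : n ≠ 0) :
    pqNum p q n ≠ 0 :=
  div_ne_zero (sub_ne_zero.mpr fun h => hne ((pow_left_inj₀ hp hq hn).mp h))
    (sub_ne_zero.mpr hne)

lemma pqFact_zero (p q : ℝ) : pqFact p q 0 = 1 :=
  Finset.prod_range_zero _

lemma pqFact_succ (p q : ℝ) (n : ℕ) : pqFact p q (n + 1) = pqFact p q n * pqNum p q (n + 1) :=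
  Finset.prod_range_succ _ n

lemma pqFact_ne_zero (hp : 0 ≤ p) (hq : 0 ≤ q) (hne : p ≠ q) (n : ℕ) : pqFact p q n ≠ 0 :=
  Finset.prod_ne_zero_iff.mpr fun j _ => pqNum_ne_zero hp hq hne j.succ_ne_zero

lemma pqBinom_zero_right (hp : 0 ≤ p) (hq : 0 ≤ q) (hne : p ≠ q) (n : ℕ) :
    pqBinom p q n 0 = 1 := by
  rw [pqBinom, pqFact_zero, Nat.sub_zero, one_mul, div_self (pqFact_ne_zero hp hq hne n)]

lemma pqBinom_self (hp : 0 ≤ p) (hq : 0 ≤ q) (hne : p ≠ q) (n : ℕ) :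
    pqBinom p q n n = 1 := by
  rw [pqBinom, Nat.sub_self, pqFact_zero, mul_one, div_self (pqFact_ne_zero hp hq hne n)]

/-- By truncated subtraction, `pqBinom p q n (n + 1)` is `pqFact p q n / pqFact p q (n + 1)`,
not `0`. -/
lemma pqBinom_succ_succ (hp : 0 ≤ p) (hq : 0 ≤ q) (hne : p ≠ q) {n k : ℕ} (hk : k < n) :
    pqBinom p q (n + 1) (k + 1) =
      p ^ (k + 1) * pqBinom p q n (k + 1) + q ^ (n - k) * pqBinom p q n k := by
  obtain ⟨j, rfl⟩ : ∃ j, n = k + j + 1 := ⟨n - k - 1, by omega⟩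
  simp only [pqBinom, show k + j + 1 + 1 - (k + 1) = j + 1 by omega,
    show k + j + 1 - (k + 1) = j by omega, show k + j + 1 - k = j + 1 by omega]
  rw [pqFact_succ _ _ (k + j + 1), pqFact_succ _ _ k, pqFact_succ _ _ j,
    show k + j + 1 + 1 = (k + 1) + (j + 1) by omega, pqNum_add]
  have hfact := pqFact_ne_zero hp hq hne
  have hk₁ := pqNum_ne_zero hp hq hne k.succ_ne_zero
  have hj₁ := pqNum_ne_zero hp hq hne j.succ_ne_zero
  field_simp

lemma pqNum_mul_pqBinom (hp : 0 ≤ p) (hq : 0 ≤ q) (hne : p ≠ q) {n k : ℕ} (hk : k ≤ n) :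
    pqNum p q (n + 1 - k) * pqBinom p q (n + 1) k = pqNum p q (n + 1) * pqBinom p q n k := by
  obtain ⟨j, rfl⟩ : ∃ j, n = k + j := ⟨n - k, by omega⟩
  simp only [pqBinom, show k + j + 1 - k = j + 1 by omega, show k + j - k = j by omega]
  rw [pqFact_succ _ _ (k + j), pqFact_succ _ _ j]
  have hfact := pqFact_ne_zero hp hq hne
  have hj₁ := pqNum_ne_zero hp hq hne j.succ_ne_zero
  field_simp

lemma pqBinom_three_term (hp : 0 ≤ p) (hq : 0 ≤ q) (hne : p ≠ q) {m k : ℕ} (hk : k ≤ m) :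
    pqBinom p q (m + 2) (k + 1) =
      p ^ (k + 1) * pqBinom p q (m + 1) (k + 1) + p ^ (m + 1 - k) * pqBinom p q (m + 1) k
        - (p ^ (m + 1) - q ^ (m + 1)) * pqBinom p q m k := by
  rw [pqBinom_succ_succ hp hq hne (by omega : k < m + 1)]
  linear_combination -pqBinom p q (m + 1) k * sub_pow_eq_mul_pqNum hne (m + 1 - k)
    + pqBinom p q m k * sub_pow_eq_mul_pqNum hne (m + 1)
    - (p - q) * pqNum_mul_pqBinom hp hq hne hk

lemma rogersSzego_succ (hp : 0 ≤ p) (hq : 0 ≤ q) (hne : p ≠ q) (n : ℕ) (z : ℝ) :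
    rogersSzego p q (n + 1) z =
      1 + ∑ k ∈ Finset.range (n + 1), pqBinom p q (n + 1) (k + 1) * z ^ (k + 1) := by
  rw [rogersSzego, Finset.sum_range_succ', pqBinom_zero_right hp hq hne, pow_zero, mul_one,
    add_comm]

lemma rogersSzego_eq_sum_add_pow (hp : 0 ≤ p) (hq : 0 ≤ q) (hne : p ≠ q) (n : ℕ) (z : ℝ) :
    rogersSzego p q n z = ∑ k ∈ Finset.range n, pqBinom p q n k * z ^ k + z ^ n := by
  rw [rogersSzego, Finset.sum_range_succ, pqBinom_self hp hq hne, one_mul]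

end

theorem rogersSzego_ttr (p q : ℝ) (hp : 0 < p) (hq : 0 < q) (hne : p ≠ q)
    (n : ℕ) (hn : 1 ≤ n) (z : ℝ) :
    rogersSzego p q (n + 1) z =
      rogersSzego p q n (p * z) + z * p ^ n * rogersSzego p q n (p⁻¹ * z)
        - z * (p ^ n - q ^ n) * rogersSzego p q (n - 1) z := by
  obtain ⟨m, rfl⟩ : ∃ m, n = m + 1 := ⟨n - 1, by omega⟩
  have hp₀ := hp.le
  have hq₀ := hq.le
  have hcoeff : ∀ k ∈ Finset.range (m + 1),
      pqBinom p q (m + 2) (k + 1) * z ^ (k + 1) =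
        pqBinom p q (m + 1) (k + 1) * (p * z) ^ (k + 1)
          + z * p ^ (m + 1) * (pqBinom p q (m + 1) k * (p⁻¹ * z) ^ k)
          - z * (p ^ (m + 1) - q ^ (m + 1)) * (pqBinom p q m k * z ^ k) := by
    intro k hk
    have hkm : k ≤ m := Finset.mem_range_succ_iff.mp hk
    rw [pqBinom_three_term hp₀ hq₀ hne hkm, pow_sub₀ p hp.ne' (by omega : k ≤ m + 1)]
    ring
  rw [rogersSzego_succ hp₀ hq₀ hne, Finset.sum_range_succ, pqBinom_self hp₀ hq₀ hne,
    Finset.sum_congr rfl hcoeff, rogersSzego_succ hp₀ hq₀ hne,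
    rogersSzego_eq_sum_add_pow hp₀ hq₀ hne (m + 1) (p⁻¹ * z), Nat.add_sub_cancel, rogersSzego,
    Finset.sum_sub_distrib, Finset.sum_add_distrib, ← Finset.mul_sum, ← Finset.mul_sum]
  have hpow : z * p ^ (m + 1) * (p⁻¹ * z) ^ (m + 1) = z ^ (m + 2) := by
    rw [mul_pow, inv_pow]
    field_simp
    ring
  linear_combination -hpow
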